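/- arXiv:0903.0172 — 4 statements merged into one kernel-verified Lean document; each statement's English description precedes it below -/
import Mathlib

section
/- Let t : Γ → M be a continuous open surjection admitting local continuous sections through every point of Γ (i.e., for every γ ∈ Γ there is a neighborhood U of t(γ) and a continuous σ : U → Γ with t ∘ σ = id and σ(t(γ)) = γ), and let s : Γ → M be continuous. Suppose S ⊆ M satisfies: for all γ ∈ Γ, t(γ) ∈ S ↔ s(γ) ∈ S, and suppose M is first-countable. Then for all γ ∈ Γ, t(γ) ∈ closure(S) implies s(γ) ∈ closure(S). -/
/-- The closure of a stable subset is stable: if `t` admits local continuous sections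
through every arrow, then `t γ ∈ closure S` implies `s γ ∈ closure S`. -/
theorem closure_stable {Γ M : Type*} [TopologicalSpace Γ] [TopologicalSpace M]
    [FirstCountableTopology M]
    (s t : Γ → M) (hs : Continuous s) (ht : Continuous t)
    (htopen : IsOpenMap t) (htsurj : Function.Surjective t)
    (hsec : ∀ γ : Γ, ∃ U ∈ nhds (t γ), ∃ σ : M → Γ,
      ContinuousOn σ U ∧ (∀ m ∈ U, t (σ m) = m) ∧ σ (t γ) = γ)
    (S : Set M) (hstable : ∀ γ : Γ, t γ ∈ S ↔ s γ ∈ S) :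
    ∀ γ : Γ, t γ ∈ closure S → s γ ∈ closure S := by
  intro γ hγ
  obtain ⟨U, hU, σ, hσ, hσt, hσγ⟩ := hsec γ
  obtain ⟨x, hxS, hx⟩ := mem_closure_iff_seq_limit.1 hγ
  have hσcont : ContinuousAt σ (t γ) := hσ.continuousAt hU
  have h1 : Filter.Tendsto (fun n => σ (x n)) Filter.atTop (nhds γ) := by
    have := hσcont.tendsto.comp hx
    rwa [hσγ] at this
  have h2 : Filter.Tendsto (fun n => s (σ (x n))) Filter.atTop (nhds (s γ)) :=
    (hs.continuousAt.tendsto).comp h1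
  have hev : ∀ᶠ n in Filter.atTop, s (σ (x n)) ∈ S := by
    filter_upwards [hx hU] with n hn
    exact (hstable (σ (x n))).1 (by rw [hσt (x n) hn]; exact hxS n)
  exact mem_closure_of_tendsto h2 hev
end

section
/- Let p : X → M and p' : X → M' be continuous maps, where p is a surjective open map admitting local continuous sections through every point of X, and p' is continuous. Assume M is first-countable. For S ⊆ M define X(S) := p'(p⁻¹(S)) ⊆ M'. Then X(closure S) ⊆ closure(X(S)). -/
/-- Half of the lemma that the Morita correspondence of subsets commutes with closure:
`X(closure S) ⊆ closure (X(S))` where `X(S) = p'(p⁻¹(S))`. -/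
theorem morita_image_closure_subset_closure_image {X M M' : Type*}
    [TopologicalSpace X] [TopologicalSpace M] [TopologicalSpace M']
    [FirstCountableTopology M]
    (p : X → M) (p' : X → M')
    (hp : Continuous p) (hpopen : IsOpenMap p) (hpsurj : Function.Surjective p)
    (hsec : ∀ x : X, ∃ U ∈ nhds (p x), ∃ σ : M → X,
      ContinuousOn σ U ∧ (∀ m ∈ U, p (σ m) = m) ∧ σ (p x) = x)
    (hp' : Continuous p') (S : Set M) :
    p' '' (p ⁻¹' (closure S)) ⊆ closure (p' '' (p ⁻¹' S)) := by
  rintro _ ⟨x, hx, rfl⟩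
  obtain ⟨U, hU, σ, hσc, hσsec, hσx⟩ := hsec x
  obtain ⟨u, huS, hulim⟩ := mem_closure_iff_seq_limit.mp hx
  have hσat : ContinuousAt σ (p x) := (hσc.continuousAt hU)
  have h1 : Filter.Tendsto (fun n => p' (σ (u n))) Filter.atTop (nhds (p' x)) := by
    have := (hp'.continuousAt.comp hσat).tendsto.comp hulim
    simpa [hσx, Function.comp_def] using this
  refine mem_closure_of_tendsto h1 ?_
  filter_upwards [hulim.eventually ((eventually_mem_nhds_iff.mpr hU).mono
    (fun m hm => mem_of_mem_nhds hm))] with n hn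
  exact ⟨σ (u n), by simpa [hσsec _ hn] using huS n, rfl⟩
end

section
/- Let Γ be a groupoid with objects M, S ⊆ M a set of objects saturated under isomorphism, and L ⊆ M. Suppose R is a subgroupoid of Γ with objects L that is full in S, i.e., every morphism of Γ between two objects of L ∩ S belongs to R. Define an equivalence relation on the set Γ_L of morphisms with source in L: γ ~ γ' iff γ' = r ∘ γ for some morphism r of R. Then the target map descends to a map φ : Γ_L/~ → M, and the restriction of φ to classes of morphisms with source in L ∩ S is injective onto its image, which equals the isomorphism-saturation of L ∩ S. -/
open CategoryTheory

/-- Arrows of a groupoid `Γ` whose source lies in `L`. -/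
def ArrowsFrom (Γ : Type*) [Groupoid Γ] (L : Set Γ) : Type _ :=
  {p : Σ x y : Γ, x ⟶ y // p.1 ∈ L}

/-- The left action relation of a subgroupoid `R` on arrows with source in `L`:
`a ~ b` iff `b` is obtained from `a` by precomposition with an arrow of `R`
(so sources move within `L` while the target is unchanged). -/
def resRel {Γ : Type*} [Groupoid Γ] (L : Set Γ) (R : Subgroupoid Γ)
    (a b : ArrowsFrom Γ L) : Prop :=
  a.val.2.1 = b.val.2.1 ∧ ∃ r : b.val.1 ⟶ a.val.1,
    r ∈ R.arrows b.val.1 a.val.1 ∧ HEq b.val.2.2 (r ≫ a.val.2.2)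

/-- The target map descends to the quotient `R\Γ_L`; over classes with source in
`L ∩ S` it is injective, with image the isomorphism-saturation of `L ∩ S`. -/
theorem target_descends_injective_on_S {Γ : Type*} [Groupoid Γ] (S L : Set Γ)
    (hSsat : ∀ ⦃x y : Γ⦄, (x ≅ y) → x ∈ S → y ∈ S)
    (R : Subgroupoid Γ)
    (hRL : ∀ x y : Γ, (R.arrows x y).Nonempty → x ∈ L ∧ y ∈ L)
    (hfull : ∀ x y : Γ, x ∈ L ∩ S → y ∈ L ∩ S → ∀ f : x ⟶ y, f ∈ R.arrows x y) :
    ∃ φ : Quot (resRel L R) → Γ,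
      (∀ a : ArrowsFrom Γ L, φ (Quot.mk (resRel L R) a) = a.val.2.1) ∧
      Set.InjOn φ {q | ∃ a : ArrowsFrom Γ L, a.val.1 ∈ S ∧ Quot.mk (resRel L R) a = q} ∧
      φ '' {q | ∃ a : ArrowsFrom Γ L, a.val.1 ∈ S ∧ Quot.mk (resRel L R) a = q} =
        {y | ∃ x ∈ L ∩ S, Nonempty (x ≅ y)} := by
  refine ⟨Quot.lift (fun a => a.val.2.1) (fun a b h => h.1), fun a => rfl, ?_, ?_⟩
  · rintro q1 ⟨a, haS, rfl⟩ q2 ⟨b, hbS, rfl⟩ htgt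
    obtain ⟨⟨xa, ya, f⟩, haL⟩ := a
    obtain ⟨⟨xb, yb, g⟩, hbL⟩ := b
    simp only at htgt haS hbS haL hbL
    subst htgt
    apply Quot.sound
    refine ⟨rfl, g ≫ Groupoid.inv f, hfull _ _ ⟨hbL, hbS⟩ ⟨haL, haS⟩ _, ?_⟩
    simp
  · ext y
    constructor
    · rintro ⟨q, ⟨a, haS, rfl⟩, rfl⟩
      exact ⟨a.val.1, ⟨a.2, haS⟩, ⟨Groupoid.isoEquivHom _ _ |>.symm a.val.2.2⟩⟩
    · rintro ⟨x, ⟨hxL, hxS⟩, ⟨e⟩⟩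
      exact ⟨Quot.mk _ ⟨⟨x, y, e.hom⟩, hxL⟩, ⟨⟨⟨x, y, e.hom⟩, hxL⟩, hxS, rfl⟩, rfl⟩
end

section
/- Let φ : Z → M be continuous, S ⊆ M with φ⁻¹(S) dense in Z and φ : φ⁻¹(S) → S a homeomorphism (so (Z, φ) is a resolution of closure(S)). Let p : X → M and p' : X → M' be surjective open continuous maps with local sections, realizing a correspondence of subsets T ↦ p'(p⁻¹(T)). Define Z' := (Z ×_{φ,M,p} X)/~ where (z, x) ~ (z·γ⁻¹, γ·x) for a free proper group(oid) action, and φ'([z, x]) := p'(x). Then, assuming the quotient map Z ×_M X → Z' is open and surjective with local sections, φ'⁻¹(S') is dense in Z', where S' := p'(p⁻¹(S)). -/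
/-- The transferred resolution has dense preimage of the transferred subset:
if `φ⁻¹(S)` is dense in `Z`, then `φ'⁻¹(S')` is dense in `Z'`, where
`Z' = (Z ×_M X)/∼`, `φ'([z,x]) = p'(x)` and `S' = p'(p⁻¹(S))`. -/
theorem transferred_resolution_dense {Z M X M' Z' : Type*}
    [TopologicalSpace Z] [TopologicalSpace M] [TopologicalSpace X]
    [TopologicalSpace M'] [TopologicalSpace Z']
    [FirstCountableTopology M]
    (φ : Z → M) (hφ : Continuous φ) (S : Set M) (hdense : Dense (φ ⁻¹' S))
    (p : X → M) (p' : X → M')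
    (hp : Continuous p) (hpopen : IsOpenMap p) (hpsurj : Function.Surjective p)
    (hsec : ∀ x : X, ∃ U ∈ nhds (p x), ∃ σ : M → X,
      ContinuousOn σ U ∧ (∀ m ∈ U, p (σ m) = m) ∧ σ (p x) = x)
    (hp' : Continuous p')
    (q : {w : Z × X // φ w.1 = p w.2} → Z')
    (hq : Continuous q) (hqopen : IsOpenMap q) (hqsurj : Function.Surjective q)
    (φ' : Z' → M') (hφ' : Continuous φ')
    (hcompat : ∀ w, φ' (q w) = p' w.val.2) :
    Dense (φ' ⁻¹' (p' '' (p ⁻¹' S))) := by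
  rw [dense_iff_inter_open]
  intro O hO hOne
  obtain ⟨z', hz'O⟩ := hOne
  obtain ⟨w₀, rfl⟩ := hqsurj z'
  obtain ⟨U, hU, σ, hσc, hσp, hσx⟩ := hsec w₀.val.2
  obtain ⟨U', hU'sub, hU'open, hxU'⟩ := mem_nhds_iff.mp hU
  -- the map z ↦ (z, σ (φ z)) from φ⁻¹' U' into the fiber product
  have hmem : ∀ z : (φ ⁻¹' U' : Set Z), φ z.val = p (σ (φ z.val)) := fun z =>
    (hσp _ (hU'sub z.prop)).symm
  set F : (φ ⁻¹' U' : Set Z) → {w : Z × X // φ w.1 = p w.2} :=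
    fun z => ⟨(z.val, σ (φ z.val)), hmem z⟩ with hF
  have hFc : Continuous F := by
    apply Continuous.subtype_mk
    apply Continuous.prodMk continuous_subtype_val
    exact hσc.comp_continuous (hφ.comp continuous_subtype_val)
      (fun z => hU'sub z.prop)
  have hz₀U' : w₀.val.1 ∈ φ ⁻¹' U' := by
    simp only [Set.mem_preimage, w₀.prop]; exact hxU'
  have hFz₀ : F ⟨w₀.val.1, hz₀U'⟩ = w₀ := by
    have h2 : σ (φ w₀.val.1) = w₀.val.2 := by rw [w₀.prop]; exact hσx
    apply Subtype.ext
    show (w₀.val.1, σ (φ w₀.val.1)) = w₀.val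
    rw [h2]
  -- the good open set in Z
  have h1 : IsOpen (F ⁻¹' (q ⁻¹' O)) := (hO.preimage hq).preimage hFc
  have hGopen := (hU'open.preimage hφ).isOpenMap_subtype_val _ h1
  have hGne : (Subtype.val '' (F ⁻¹' (q ⁻¹' O))).Nonempty := by
    refine ⟨w₀.val.1, ⟨⟨w₀.val.1, hz₀U'⟩, ?_, rfl⟩⟩
    show q (F _) ∈ O
    rw [hFz₀]; exact hz'O
  obtain ⟨z, hzS, hzG⟩ := hdense.exists_mem_open hGopen hGne
  obtain ⟨⟨z, hzU'⟩, hzq, rfl⟩ := hzG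
  refine ⟨q (F ⟨z, hzU'⟩), hzq, ?_⟩
  show φ' (q (F ⟨z, hzU'⟩)) ∈ p' '' (p ⁻¹' S)
  rw [hcompat]
  exact ⟨σ (φ z), by simpa [hσp _ (hU'sub hzU')] using hzS, rfl⟩
end
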